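/- Let H ≤ G be finite groups, [H,G] the interval of intermediate subgroups, and M_1,...,M_n the coatoms of [H,G] (maximal subgroups of G containing H). Then |H| · ∑_{K ∈ [H,G]} μ(K,G)·|K:H| equals the number of elements of G lying in none of the M_i, i.e., |G \ ⋃_i M_i|. -/

import Mathlib

/-!
Since `|H| · |K:H| = |K|`, the left-hand side is `∑_{K ≥ H} μ(K,G) |K|`. Counting `|K|` element by
element and swapping the sums gives `∑_{g ∈ G} ∑_{K ≥ ⟨H,g⟩} μ(K,G)`, and by the defining recursion
of `μ` the inner sum is `1` if `⟨H,g⟩ = G` and `0` otherwise. Finally `⟨H,g⟩ = G` exactly when `g`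
lies in no maximal subgroup of `G` containing `H`.
-/

open Finset

open scoped Classical in
theorem Finset.sum_filter_mobius_eq_ite {α : Type*} [PartialOrder α] [Fintype α]
    (μ : α → α → ℤ) {a b : α} (hab : a ≤ b) (hμ_self : μ b b = 1)
    (hμ_lt : a < b → μ a b = -∑ x ∈ univ.filter (fun x => a < x ∧ x ≤ b), μ x b) :
    ∑ x ∈ univ.filter (fun x => a ≤ x ∧ x ≤ b), μ x b = if a = b then 1 else 0 := by
  rcases hab.eq_or_lt with rfl | hlt
  · have hsingleton : univ.filter (fun x => a ≤ x ∧ x ≤ a) = {a} := by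
      ext x; simp [le_antisymm_iff, and_comm]
    simp [hsingleton, hμ_self]
  · have hinsert : univ.filter (fun x => a ≤ x ∧ x ≤ b)
        = insert a (univ.filter (fun x => a < x ∧ x ≤ b)) := by
      ext x
      simp only [mem_insert, mem_filter, mem_univ, true_and, le_iff_eq_or_lt (a := a)]
      aesop
    rw [hinsert, sum_insert (by simp), hμ_lt hlt, if_neg hlt.ne]
    ring

namespace Subgroup

variable {G : Type*} [Group G]

theorem card_mul_relIndex {H K : Subgroup G} (hHK : H ≤ K) :
    Nat.card H * H.relIndex K = Nat.card K := by
  rw [relIndex, ← card_mul_index (H.subgroupOf K),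
    Nat.card_congr (subgroupOfEquivOfLe hHK).toEquiv]

theorem sup_zpowers_eq_top_iff [IsCoatomic (Subgroup G)] (H : Subgroup G) (g : G) :
    H ⊔ zpowers g = ⊤ ↔ ∀ M : Subgroup G, IsCoatom M → H ≤ M → g ∉ M := by
  constructor
  · intro htop M hM hHM hgM
    have : H ⊔ zpowers g ≤ M := sup_le hHM (zpowers_le.mpr hgM)
    exact hM.1 (top_le_iff.mp (htop ▸ this))
  · intro hnone
    by_contra hne
    obtain ⟨M, hM, hle⟩ := (eq_top_or_exists_le_coatom (H ⊔ zpowers g)).resolve_left hne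
    exact hnone M hM (le_sup_left.trans hle) (hle (mem_sup_right (mem_zpowers g)))

open scoped Classical in
theorem sum_mul_card_eq_sum_sum_sup_zpowers [Fintype G] (H : Subgroup G)
    (f : Subgroup G → ℤ) :
    ∑ K ∈ univ.filter (fun K : Subgroup G => H ≤ K), f K * Nat.card K
      = ∑ g : G, ∑ K ∈ univ.filter (fun K : Subgroup G => H ⊔ zpowers g ≤ K), f K := by
  have hcard (K : Subgroup G) : (Nat.card K : ℤ) = ∑ _g ∈ univ.filter (· ∈ K), 1 := by
    rw [sum_const, Nat.card_eq_fintype_card, Fintype.card_subtype, nsmul_one]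
  simp_rw [hcard, mul_sum, mul_one]
  refine sum_comm' fun K g => ?_
  simp only [mem_filter, mem_univ, true_and, sup_le_iff, zpowers_le]
  tauto

end Subgroup

open scoped Classical in
/-- For finite groups `H ≤ G` with coatoms `M_i` of the interval `[H,G]`
(i.e. maximal subgroups of `G` containing `H`),
`|H| · ∑_{K ∈ [H,G]} μ(K,G)·|K:H| = |G \ ⋃ᵢ M_i|`. -/
theorem stmt7 {G : Type*} [Group G] [Fintype G] (H : Subgroup G)
    (μ : Subgroup G → Subgroup G → ℤ)
    (hμ_self : ∀ K : Subgroup G, μ K K = 1)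
    (hμ_lt : ∀ K K' : Subgroup G, K < K' →
      μ K K' = -∑ L ∈ Finset.univ.filter (fun L : Subgroup G => K < L ∧ L ≤ K'), μ L K') :
    (Nat.card H : ℤ) * (∑ K ∈ Finset.univ.filter (fun K : Subgroup G => H ≤ K),
        μ K ⊤ * (H.relIndex K : ℤ)) =
      Nat.card {g : G // ∀ M : Subgroup G, IsCoatom M → H ≤ M → g ∉ M} := by
  have hmobius (L : Subgroup G) :
      ∑ K ∈ univ.filter (fun K : Subgroup G => L ≤ K), μ K ⊤ = if L = ⊤ then 1 else 0 := by
    simpa only [le_top, and_true] using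
      sum_filter_mobius_eq_ite μ le_top (hμ_self ⊤) (hμ_lt L ⊤)
  calc (Nat.card H : ℤ) * ∑ K ∈ univ.filter (fun K : Subgroup G => H ≤ K),
        μ K ⊤ * (H.relIndex K : ℤ)
      = ∑ K ∈ univ.filter (fun K : Subgroup G => H ≤ K), μ K ⊤ * Nat.card K := by
        rw [mul_sum]
        refine sum_congr rfl fun K hK => ?_
        rw [← Subgroup.card_mul_relIndex (mem_filter.mp hK).2]
        push_cast
        ring
    _ = ∑ g : G, if H ⊔ Subgroup.zpowers g = ⊤ then 1 else 0 := by
        simp only [Subgroup.sum_mul_card_eq_sum_sum_sup_zpowers, hmobius]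
    _ = Nat.card {g : G // ∀ M : Subgroup G, IsCoatom M → H ≤ M → g ∉ M} := by
        simp only [Subgroup.sup_zpowers_eq_top_iff, sum_boole, Nat.card_eq_fintype_card,
          Fintype.card_subtype]
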